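/- arXiv:1305.0144 — 4 statements merged into one kernel-verified Lean document; each statement's English description precedes it below -/
import Mathlib

section
/- Let C ⊆ ℝⁿ be a closed convex cone and K = {X ∈ Sym(n) : Xw ∈ C for all w ∈ C*}. Then K* = closure(cone{wvᵀ + vwᵀ : v, w ∈ C*}). -/
open scoped Matrix
open Matrix

/-- The dual cone of a set of matrices in `Sym(n)` w.r.t. the trace inner product. -/
def dualMat {n : ℕ} (S : Set (Matrix (Fin n) (Fin n) ℝ)) :
    Set (Matrix (Fin n) (Fin n) ℝ) :=
  {A | A.IsSymm ∧ ∀ X ∈ S, 0 ≤ (Xᵀ * A).trace}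

/-- The dual cone of a set of vectors in `ℝⁿ`. -/
def dualVec {n : ℕ} (S : Set (Fin n → ℝ)) : Set (Fin n → ℝ) :=
  {w | ∀ z ∈ S, 0 ≤ w ⬝ᵥ z}

/-- The convex conic hull of a set `S` of matrices: all nonnegative scalings of
convex combinations of elements of `S`. -/
def coneHull {n : ℕ} (S : Set (Matrix (Fin n) (Fin n) ℝ)) :
    Set (Matrix (Fin n) (Fin n) ℝ) :=
  {M | ∃ t : ℝ, 0 ≤ t ∧ ∃ N ∈ convexHull ℝ S, M = t • N}

/-!
If `C ≠ ∅`, the bipolar theorem in `ℝⁿ` turns `Xw ∈ C` into `vᵀXw ≥ 0` for all `v ∈ C*`. As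
the trace pairing of a symmetric `X` with `wvᵀ + vwᵀ` is `2 vᵀXw`, `K` is the dual in `Sym(n)`
of the generators `wvᵀ + vwᵀ`, so `K*` is their double dual, which Hahn–Banach separation in
`Sym(n)` identifies with their closed conic hull. If `C = ∅`, then `K = ∅` and `C* = ℝⁿ`, and
both sides are all of `Sym(n)`.
-/

section Separation

variable {E : Type*} [TopologicalSpace E] [AddCommGroup E] [IsTopologicalAddGroup E]
  [Module ℝ E] [ContinuousSMul ℝ E] [LocallyConvexSpace ℝ E]

theorem exists_strongDual_nonneg_of_notMem_cone {s : Set E} (hcl : IsClosed s)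
    (hconv : Convex ℝ s) (hsmul : ∀ x ∈ s, ∀ t : ℝ, 0 ≤ t → t • x ∈ s) (h0 : (0 : E) ∈ s)
    {x₀ : E} (hx₀ : x₀ ∉ s) : ∃ f : StrongDual ℝ E, (∀ x ∈ s, 0 ≤ f x) ∧ f x₀ < 0 := by
  obtain ⟨f, u, hfx₀, hu⟩ := geometric_hahn_banach_point_closed hconv hcl hx₀
  have hu0 : u < 0 := by simpa using hu 0 h0
  refine ⟨f, fun x hx => ?_, hfx₀.trans hu0⟩
  by_contra! hfx
  -- rescaling `x` by `u / f x > 0` puts it on the hyperplane `f = u`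
  simpa [hfx.ne] using hu ((u / f x) • x) (hsmul x hx _ (div_nonneg_of_nonpos hu0.le hfx.le))

end Separation

instance Matrix.instLocallyConvexSpace {m n : Type*} : LocallyConvexSpace ℝ (Matrix m n ℝ) :=
  inferInstanceAs (LocallyConvexSpace ℝ (m → n → ℝ))

namespace Matrix

variable {m : Type*} [Fintype m]

theorem trace_transpose_mul_comm (A B : Matrix m m ℝ) : (Aᵀ * B).trace = (Bᵀ * A).trace := by
  rw [← trace_transpose, transpose_mul, transpose_transpose]

theorem trace_transpose_mul_vecMulVec (X : Matrix m m ℝ) (a b : m → ℝ) :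
    (Xᵀ * vecMulVec a b).trace = a ⬝ᵥ X *ᵥ b := by
  rw [trace_mul_comm, vecMulVec_mul, trace_vecMulVec, vecMul_transpose, dotProduct_comm]

variable [DecidableEq m]

theorem eq_zero_of_forall_dotProduct_mulVec_nonneg {X : Matrix m m ℝ}
    (h : ∀ v w, 0 ≤ v ⬝ᵥ X *ᵥ w) : X = 0 := by
  ext i j
  have hpos := h (Pi.single i 1) (Pi.single j 1)
  have hneg := h (-Pi.single i 1) (Pi.single j 1)
  simp only [neg_dotProduct, mulVec_single_one, single_one_dotProduct, col_apply] at hpos hneg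
  simp only [zero_apply]
  linarith

end Matrix

namespace LinearMap

variable {m : Type*} [Fintype m] [DecidableEq m]

theorem exists_eq_trace_transpose_mul (f : Matrix m m ℝ →ₗ[ℝ] ℝ) :
    ∃ Y : Matrix m m ℝ, ∀ M, f M = (Yᵀ * M).trace := by
  refine ⟨Matrix.of fun i j => f (Matrix.single i j 1), fun M => ?_⟩
  calc f M = f (∑ i, ∑ j, M i j • Matrix.single i j 1) := by
        simp only [smul_single, smul_eq_mul, mul_one, ← matrix_eq_sum_single]
    _ = ∑ i, ∑ j, f (Matrix.single i j 1) * M i j := by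
        simp only [map_sum, map_smul, smul_eq_mul, mul_comm]
    _ = _ := by
        rw [Finset.sum_comm]
        rfl

theorem exists_isSymm_eq_trace_transpose_mul (f : Matrix m m ℝ →ₗ[ℝ] ℝ) :
    ∃ X : Matrix m m ℝ, X.IsSymm ∧ ∀ M, M.IsSymm → f M = (Xᵀ * M).trace := by
  obtain ⟨Y, hY⟩ := f.exists_eq_trace_transpose_mul
  refine ⟨(1 / 2 : ℝ) • (Y + Yᵀ), ?_, fun M hM => ?_⟩
  · rw [Matrix.IsSymm, transpose_smul, transpose_add, transpose_transpose, add_comm]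
  · have hYM : (Y * M).trace = (Yᵀ * M).trace := by
      rw [← Matrix.trace_transpose, transpose_mul, hM.eq, Matrix.trace_mul_comm]
    rw [hY, transpose_smul, transpose_add, transpose_transpose, smul_mul, add_mul, trace_smul,
      trace_add, hYM, smul_eq_mul]
    ring

end LinearMap

section DualVec

variable {n : ℕ}

theorem zero_mem_dualVec (C : Set (Fin n → ℝ)) : 0 ∈ dualVec C := fun z _ => by simp

theorem dualVec_empty : dualVec (∅ : Set (Fin n → ℝ)) = Set.univ :=
  Set.eq_univ_of_forall fun _ _ h => h.elim

theorem mem_iff_forall_dualVec {C : Set (Fin n → ℝ)} (hcl : IsClosed C) (hconv : Convex ℝ C)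
    (hcone : ∀ c ∈ C, ∀ t : ℝ, 0 ≤ t → t • c ∈ C) (hne : C.Nonempty) {z : Fin n → ℝ} :
    z ∈ C ↔ ∀ w ∈ dualVec C, 0 ≤ w ⬝ᵥ z := by
  refine ⟨fun hz w hw => hw z hz, fun h => ?_⟩
  by_contra hz
  obtain ⟨c, hc⟩ := hne
  obtain ⟨f, hfC, hfz⟩ :=
    exists_strongDual_nonneg_of_notMem_cone hcl hconv hcone (by simpa using hcone c hc 0 le_rfl) hz
  set w := (dotProductEquiv ℝ (Fin n)).symm f.toLinearMap
  have hw : ∀ x, w ⬝ᵥ x = f x := fun x =>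
    LinearMap.congr_fun ((dotProductEquiv ℝ (Fin n)).apply_symm_apply f.toLinearMap) x
  have hwC : w ∈ dualVec C := fun x hx => (hw x).symm ▸ hfC x hx
  exact (h w hwC).not_gt (by rwa [hw])

end DualVec

section ConeHull

variable {n : ℕ}

theorem subset_coneHull (S : Set (Matrix (Fin n) (Fin n) ℝ)) : S ⊆ coneHull S :=
  fun M hM => ⟨1, zero_le_one, M, subset_convexHull ℝ S hM, (one_smul ℝ M).symm⟩

theorem smul_mem_coneHull {S : Set (Matrix (Fin n) (Fin n) ℝ)} {M : Matrix (Fin n) (Fin n) ℝ}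
    (hM : M ∈ coneHull S) {t : ℝ} (ht : 0 ≤ t) : t • M ∈ coneHull S := by
  obtain ⟨s, hs, N, hN, rfl⟩ := hM
  exact ⟨t * s, mul_nonneg ht hs, N, hN, smul_smul t s N⟩

theorem convex_coneHull (S : Set (Matrix (Fin n) (Fin n) ℝ)) : Convex ℝ (coneHull S) := by
  rintro _ ⟨s₁, hs₁, N₁, hN₁, rfl⟩ _ ⟨s₂, hs₂, N₂, hN₂, rfl⟩ a b ha hb _
  simp only [smul_smul]
  have h₁ : 0 ≤ a * s₁ := mul_nonneg ha hs₁
  have h₂ : 0 ≤ b * s₂ := mul_nonneg hb hs₂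
  rcases (add_nonneg h₁ h₂).eq_or_lt with hsum | hsum
  · obtain ⟨e₁, e₂⟩ := (add_eq_zero_iff_of_nonneg h₁ h₂).1 hsum.symm
    exact ⟨0, le_rfl, N₁, hN₁, by simp [e₁, e₂]⟩
  -- a convex combination of `N₁, N₂` with weights proportional to `a s₁, b s₂`
  refine ⟨a * s₁ + b * s₂, hsum.le, (a * s₁ / (a * s₁ + b * s₂)) • N₁ +
    (b * s₂ / (a * s₁ + b * s₂)) • N₂, convex_convexHull ℝ S hN₁ hN₂ (by positivity)
    (by positivity) (by field_simp), ?_⟩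
  rw [smul_add, smul_smul, smul_smul, mul_div_cancel₀ _ hsum.ne', mul_div_cancel₀ _ hsum.ne']

theorem closure_coneHull_subset {S T : Set (Matrix (Fin n) (Fin n) ℝ)} (hTcl : IsClosed T)
    (hTconv : Convex ℝ T) (hTsmul : ∀ A ∈ T, ∀ t : ℝ, 0 ≤ t → t • A ∈ T) (hST : S ⊆ T) :
    closure (coneHull S) ⊆ T := by
  refine closure_minimal ?_ hTcl
  rintro _ ⟨t, ht, N, hN, rfl⟩
  exact hTsmul N (convexHull_min hST hTconv hN) t ht

end ConeHull

section DualMat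

variable {n : ℕ}

theorem isClosed_dualMat (S : Set (Matrix (Fin n) (Fin n) ℝ)) : IsClosed (dualMat S) := by
  have hS : dualMat S = {A | A.IsSymm} ∩ ⋂ X ∈ S, {A | 0 ≤ (Xᵀ * A).trace} := by
    ext; simp [dualMat]
  rw [hS]
  exact (isClosed_eq continuous_id.matrix_transpose continuous_id).inter <| isClosed_biInter
    fun X _ => isClosed_le continuous_const (continuous_const.matrix_mul continuous_id).matrix_trace

theorem convex_dualMat (S : Set (Matrix (Fin n) (Fin n) ℝ)) : Convex ℝ (dualMat S) := by
  rintro A ⟨hA, hAS⟩ B ⟨hB, hBS⟩ a b ha hb _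
  refine ⟨(hA.smul a).add (hB.smul b), fun X hX => ?_⟩
  rw [Matrix.mul_add, Matrix.mul_smul, Matrix.mul_smul, trace_add, trace_smul, trace_smul]
  exact add_nonneg (smul_nonneg ha (hAS X hX)) (smul_nonneg hb (hBS X hX))

theorem smul_mem_dualMat {S : Set (Matrix (Fin n) (Fin n) ℝ)} {A : Matrix (Fin n) (Fin n) ℝ}
    (hA : A ∈ dualMat S) {t : ℝ} (ht : 0 ≤ t) : t • A ∈ dualMat S := by
  refine ⟨hA.1.smul t, fun X hX => ?_⟩
  rw [Matrix.mul_smul, trace_smul]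
  exact smul_nonneg ht (hA.2 X hX)

theorem dualMat_eq_setOf_isSymm {S : Set (Matrix (Fin n) (Fin n) ℝ)} (hS : S ⊆ {0}) :
    dualMat S = {A | A.IsSymm} :=
  Set.ext fun A => ⟨And.left, fun hA => ⟨hA, fun X hX => by simp [Set.mem_singleton_iff.1 (hS hX)]⟩⟩

theorem subset_dualMat_dualMat {S : Set (Matrix (Fin n) (Fin n) ℝ)}
    (hS : ∀ M ∈ S, M.IsSymm) : S ⊆ dualMat (dualMat S) :=
  fun M hM => ⟨hS M hM, fun X hX => trace_transpose_mul_comm M X ▸ hX.2 M hM⟩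

theorem dualMat_dualMat_eq_closure_coneHull {S : Set (Matrix (Fin n) (Fin n) ℝ)}
    (hS : ∀ M ∈ S, M.IsSymm) (hSne : S.Nonempty) :
    dualMat (dualMat S) = closure (coneHull S) := by
  refine subset_antisymm (fun A hA => ?_) (closure_coneHull_subset (isClosed_dualMat _)
    (convex_dualMat _) (fun _ hB _ ht => smul_mem_dualMat hB ht) (subset_dualMat_dualMat hS))
  by_contra hAS
  obtain ⟨M₀, hM₀⟩ := hSne
  have h0 : (0 : Matrix (Fin n) (Fin n) ℝ) ∈ closure (coneHull S) :=
    subset_closure (by simpa using smul_mem_coneHull (subset_coneHull S hM₀) le_rfl)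
  obtain ⟨f, hf, hfA⟩ := exists_strongDual_nonneg_of_notMem_cone isClosed_closure
    (convex_coneHull S).closure
    (fun B hB t ht => map_mem_closure (continuous_const_smul t) hB
      fun _ hN => smul_mem_coneHull hN ht) h0 hAS
  -- only the values of `f` on `Sym(n)` matter, so `f` may be taken to be a symmetric matrix
  obtain ⟨X, hX, hfX⟩ := f.toLinearMap.exists_isSymm_eq_trace_transpose_mul
  have hXS : X ∈ dualMat S := ⟨hX, fun M hM => by
    rw [trace_transpose_mul_comm, ← hfX M (hS M hM)]
    exact hf M (subset_closure (subset_coneHull S hM))⟩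
  exact (hA.2 X hXS).not_gt (by rwa [← hfX A hA.1])

end DualMat

section SymmOuterProducts

variable {n : ℕ}

def symmOuterProducts (W : Set (Fin n → ℝ)) : Set (Matrix (Fin n) (Fin n) ℝ) :=
  {M | ∃ v ∈ W, ∃ w ∈ W, M = vecMulVec w v + vecMulVec v w}

theorem isSymm_of_mem_symmOuterProducts {W : Set (Fin n → ℝ)} {M : Matrix (Fin n) (Fin n) ℝ}
    (hM : M ∈ symmOuterProducts W) : M.IsSymm := by
  obtain ⟨v, -, w, -, rfl⟩ := hM
  rw [IsSymm, transpose_add, transpose_vecMulVec, transpose_vecMulVec, add_comm]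

theorem mem_dualMat_symmOuterProducts_iff {W : Set (Fin n → ℝ)} {X : Matrix (Fin n) (Fin n) ℝ} :
    X ∈ dualMat (symmOuterProducts W) ↔ X.IsSymm ∧ ∀ v ∈ W, ∀ w ∈ W, 0 ≤ v ⬝ᵥ X *ᵥ w := by
  refine and_congr_right fun hX => ?_
  have hpair : ∀ v w : Fin n → ℝ,
      ((vecMulVec w v + vecMulVec v w)ᵀ * X).trace = 2 * (v ⬝ᵥ X *ᵥ w) := fun v w => by
    rw [trace_transpose_mul_comm, Matrix.mul_add, trace_add, trace_transpose_mul_vecMulVec,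
      trace_transpose_mul_vecMulVec, dotProduct_mulVec, ← mulVec_transpose, hX.eq,
      dotProduct_comm]
    ring
  refine ⟨fun h v hv w hw => ?_, fun h M hM => ?_⟩
  · have h2 := h _ ⟨v, hv, w, hw, rfl⟩
    rw [hpair] at h2
    linarith
  · obtain ⟨v, hv, w, hw, rfl⟩ := hM
    rw [hpair]
    exact mul_nonneg zero_le_two (h v hv w hw)

theorem dualMat_symmOuterProducts_univ_subset :
    dualMat (symmOuterProducts (Set.univ : Set (Fin n → ℝ))) ⊆ {0} := fun _ hX =>
  eq_zero_of_forall_dotProduct_mulVec_nonneg fun v w =>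
    (mem_dualMat_symmOuterProducts_iff.1 hX).2 v trivial w trivial

theorem setOf_mulVec_mem_eq_dualMat_symmOuterProducts {C : Set (Fin n → ℝ)} (hcl : IsClosed C)
    (hconv : Convex ℝ C) (hcone : ∀ c ∈ C, ∀ t : ℝ, 0 ≤ t → t • c ∈ C) (hne : C.Nonempty) :
    {X : Matrix (Fin n) (Fin n) ℝ | X.IsSymm ∧ ∀ w ∈ dualVec C, X *ᵥ w ∈ C} =
      dualMat (symmOuterProducts (dualVec C)) := by
  ext X
  simp only [mem_dualMat_symmOuterProducts_iff, Set.mem_ofPred_eq,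
    mem_iff_forall_dualVec hcl hconv hcone hne]
  exact and_congr_right fun _ => forall₂_comm

end SymmOuterProducts

/-- Lemma on `K*`. For a closed convex cone `C ⊆ ℝⁿ` and
`K = {X ∈ Sym(n) : Xw ∈ C for all w ∈ C*}`, one has
`K* = closure(cone{wvᵀ + vwᵀ : v, w ∈ C*})`. -/
theorem dual_of_K {n : ℕ} (C : Set (Fin n → ℝ)) (hCcl : IsClosed C)
    (hCconv : Convex ℝ C) (hCcone : ∀ c ∈ C, ∀ t : ℝ, 0 ≤ t → t • c ∈ C) :
    dualMat {X : Matrix (Fin n) (Fin n) ℝ | X.IsSymm ∧ ∀ w ∈ dualVec C, X.mulVec w ∈ C} =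
      closure (coneHull {M | ∃ v ∈ dualVec C, ∃ w ∈ dualVec C,
        M = vecMulVec w v + vecMulVec v w}) := by
  refine Eq.trans ?_ (dualMat_dualMat_eq_closure_coneHull (S := symmOuterProducts (dualVec C))
    (fun _ => isSymm_of_mem_symmOuterProducts) ⟨0, 0, zero_mem_dualVec C, 0, zero_mem_dualVec C,
      by simp⟩)
  rcases C.eq_empty_or_nonempty with rfl | hne
  · -- `K = ∅`, while `C* = ℝⁿ` forces the dual of the generators to be `{0}`
    rw [dualMat_eq_setOf_isSymm fun _ hX => (hX.2 0 (zero_mem_dualVec ∅)).elim, dualVec_empty,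
      dualMat_eq_setOf_isSymm dualMat_symmOuterProducts_univ_subset]
  · rw [setOf_mulVec_mem_eq_dualMat_symmOuterProducts hCcl hCconv hCcone hne]
end

section
/- (Rendl–Wolkowicz / consequence of the S-lemma) Let D = {x ∈ ℝⁿ : ‖x‖ ≤ 1} and J = diag(−I_n, 1) ∈ Sym(n+1). Then FC₊(D) = PSD(n+1) + cone{J}, i.e., a symmetric matrix A satisfies zᵀAz ≥ 0 for all z = (x,τ) with ‖x‖ ≤ τ if and only if A = P + ηJ for some P ⪰ 0 and η ≥ 0. -/
/-!
Quadratic forms are even, so `zᵀAz ≥ 0` on the cone `‖x‖ ≤ τ` is the same as `zᵀAz ≥ 0`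
wherever `zᵀJz = τ² - ‖x‖² ≥ 0`, and `J` is positive at `(0, 1)`. The homogeneous S-lemma then
gives `η ≥ 0` with `zᵀAz ≥ η zᵀJz` for all `z`, i.e. `A - ηJ ⪰ 0`.

For the S-lemma with forms `f`, `g` it suffices that `f w / g w ≤ f z / g z` whenever
`g w < 0 < g z`; then `η = inf {f z / g z | g z > 0}` works. That inequality lives in the plane
spanned by `z` and `w`: the line `t ↦ g w • z + t • w` meets the zero set of `g` at one negative and
one positive `t`, where `f ≥ 0`, and this forces the right sign on the `t²`-coefficient of
`g z • f - f z • g`, which vanishes at `t = 0`.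
-/

open scoped Matrix
open Matrix

theorem exists_neg_pos_roots_of_const_neg {p c : ℝ} (hc : c < 0) :
    ∃ t₁ t₂ : ℝ, t₁ < 0 ∧ 0 < t₂ ∧ t₁ ^ 2 + p * t₁ + c = 0 ∧ t₂ ^ 2 + p * t₂ + c = 0 := by
  set s := √(p ^ 2 - 4 * c)
  have hs : s ^ 2 = p ^ 2 - 4 * c := Real.sq_sqrt (by nlinarith)
  have hps : |p| < s := (Real.lt_sqrt (abs_nonneg p)).mpr (by rw [sq_abs]; linarith)
  obtain ⟨hp₁, hp₂⟩ := abs_lt.mp hps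
  refine ⟨(-p - s) / 2, (-p + s) / 2, by linarith, by linarith, ?_, ?_⟩ <;>
    linear_combination hs / 4

namespace QuadraticMap

variable {V : Type*} [AddCommGroup V] [Module ℝ V]

theorem map_smul_add_smul (Q : QuadraticMap ℝ V ℝ) (a b : ℝ) (x y : V) :
    Q (a • x + b • y) = a * a * Q x + a * b * polar Q x y + b * b * Q y := by
  rw [QuadraticMap.map_add (⇑Q), Q.map_smul, Q.map_smul, polar_smul_left, polar_smul_right]
  simp only [smul_eq_mul]
  ring

variable {f g : QuadraticMap ℝ V ℝ}

theorem cross_mul_le_of_nonneg_imp_nonneg (h : ∀ z, 0 ≤ g z → 0 ≤ f z) {z w : V}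
    (hz : 0 < g z) (hw : g w < 0) : f z * g w ≤ f w * g z := by
  obtain ⟨t₁, t₂, ht₁, ht₂, hroot₁, hroot₂⟩ :=
    exists_neg_pos_roots_of_const_neg (p := polar g z w) (mul_neg_of_neg_of_pos hw hz)
  have along_zeros : ∀ t, t ^ 2 + polar g z w * t + g w * g z = 0 →
      0 ≤ t * (g w * (polar f z w * g z - f z * polar g z w) + t * (f w * g z - f z * g w)) := by
    intro t ht
    have hg : g (g w • z + t • w) = 0 := by
      rw [map_smul_add_smul]
      linear_combination g w * ht
    have hf := h _ hg.ge
    rw [map_smul_add_smul] at hf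
    linear_combination g z * hf + f z * g w * ht
  have hc₂ := nonneg_of_mul_nonneg_right (along_zeros t₂ hroot₂) ht₂
  have hc₁ := nonpos_of_mul_nonneg_right (along_zeros t₁ hroot₁) ht₁
  nlinarith

theorem s_lemma (hg : ∃ z, 0 < g z) :
    (∀ z, 0 ≤ g z → 0 ≤ f z) ↔ ∃ η : ℝ, 0 ≤ η ∧ ∀ z, η * g z ≤ f z := by
  refine ⟨fun h ↦ ?_, fun ⟨η, hη, hfg⟩ z hz ↦ (mul_nonneg hη hz).trans (hfg z)⟩
  set ratios := (fun z ↦ f z / g z) '' {z | 0 < g z}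
  have hne : ratios.Nonempty := hg.elim fun z hz ↦ ⟨_, z, hz, rfl⟩
  have hbdd : ∀ r ∈ ratios, 0 ≤ r := by
    rintro _ ⟨z, hz, rfl⟩
    exact div_nonneg (h z hz.le) hz.le
  refine ⟨sInf ratios, le_csInf hne hbdd, fun z ↦ ?_⟩
  rcases lt_trichotomy (g z) 0 with hz | hz | hz
  · refine (div_le_iff_of_neg hz).mp (le_csInf hne ?_)
    rintro _ ⟨w, hw, rfl⟩
    rw [div_le_iff_of_neg hz, div_mul_eq_mul_div, div_le_iff₀ hw]
    exact cross_mul_le_of_nonneg_imp_nonneg h hw hz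
  · simpa [hz] using h z hz.ge
  · exact (le_div_iff₀ hz).mp (csInf_le ⟨0, hbdd⟩ ⟨z, hz, rfl⟩)

end QuadraticMap

theorem Matrix.toQuadraticForm'_apply {ι : Type*} [Fintype ι] [DecidableEq ι]
    (M : Matrix ι ι ℝ) (z : ι → ℝ) : M.toQuadraticForm' z = z ⬝ᵥ M *ᵥ z := by
  simp [toQuadraticForm', toLinearMap₂'_apply']

theorem Matrix.IsSymm.posSemidef_iff {ι : Type*} [Fintype ι] {M : Matrix ι ι ℝ}
    (hM : M.IsSymm) : M.PosSemidef ↔ ∀ z, 0 ≤ z ⬝ᵥ M *ᵥ z := by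
  simp [posSemidef_iff_dotProduct_mulVec, hM]

theorem exists_posSemidef_add_smul_iff {ι : Type*} [Fintype ι] {A J : Matrix ι ι ℝ}
    (hA : A.IsSymm) (hJ : J.IsSymm) :
    (∃ (P : Matrix ι ι ℝ) (η : ℝ), P.PosSemidef ∧ 0 ≤ η ∧ A = P + η • J) ↔
      ∃ η : ℝ, 0 ≤ η ∧ ∀ z, η * (z ⬝ᵥ J *ᵥ z) ≤ z ⬝ᵥ A *ᵥ z := by
  have hsub (η : ℝ) : (A - η • J).PosSemidef ↔ ∀ z, η * (z ⬝ᵥ J *ᵥ z) ≤ z ⬝ᵥ A *ᵥ z := by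
    rw [(hA.sub (hJ.smul η)).posSemidef_iff]
    simp [sub_mulVec, smul_mulVec]
  constructor
  · rintro ⟨P, η, hP, hη, rfl⟩
    exact ⟨η, hη, (hsub η).mp (by rwa [add_sub_cancel_right])⟩
  · rintro ⟨η, hη, h⟩
    exact ⟨A - η • J, η, (hsub η).mpr h, hη, (sub_add_cancel A _).symm⟩

theorem dotProduct_diagonal_snoc_mulVec {n : ℕ} (z : Fin (n + 1) → ℝ) :
    z ⬝ᵥ diagonal (Fin.snoc (fun _ : Fin n ↦ (-1 : ℝ)) 1) *ᵥ z =
      z (Fin.last n) ^ 2 - Fin.init z ⬝ᵥ Fin.init z := by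
  simp [dotProduct, mulVec_diagonal, Fin.sum_univ_castSucc, Fin.init]
  ring

theorem forall_sqrt_le_imp_iff_of_even {n : ℕ} {q : (Fin (n + 1) → ℝ) → ℝ}
    (hq : ∀ z, q (-z) = q z) :
    (∀ z, √(Fin.init z ⬝ᵥ Fin.init z) ≤ z (Fin.last n) → 0 ≤ q z) ↔
      ∀ z, 0 ≤ z (Fin.last n) ^ 2 - Fin.init z ⬝ᵥ Fin.init z → 0 ≤ q z := by
  refine ⟨fun h z hz ↦ ?_, fun h z hz ↦ h z ?_⟩
  · rcases le_total 0 (z (Fin.last n)) with hτ | hτ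
    · exact h z ((Real.sqrt_le_left hτ).mpr (by linarith))
    · rw [← hq]
      refine h (-z) ((Real.sqrt_le_left (by simpa using hτ)).mpr ?_)
      rwa [show Fin.init (-z) = -Fin.init z from rfl, neg_dotProduct, dotProduct_neg, neg_neg,
        Pi.neg_apply, neg_sq, ← sub_nonneg]
  · linarith [(Real.sqrt_le_iff.mp hz).2]

/-- Rendl–Wolkowicz; consequence of the S-lemma.
A symmetric matrix `A ∈ Sym(n+1)` satisfies `zᵀAz ≥ 0` for all `z = (x,τ)` with
`‖x‖ ≤ τ` if and only if `A = P + ηJ` for some `P ⪰ 0` and `η ≥ 0`, where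
`J = diag(−Iₙ, 1)`. -/
theorem rendl_wolkowicz {n : ℕ}
    (J : Matrix (Fin (n + 1)) (Fin (n + 1)) ℝ)
    (hJ : J = Matrix.diagonal (Fin.snoc (fun _ : Fin n => (-1 : ℝ)) 1))
    (A : Matrix (Fin (n + 1)) (Fin (n + 1)) ℝ) (hA : A.IsSymm) :
    (∀ z : Fin (n + 1) → ℝ,
        Real.sqrt ((fun i : Fin n => z i.castSucc) ⬝ᵥ (fun i : Fin n => z i.castSucc)) ≤
          z (Fin.last n) →
        0 ≤ z ⬝ᵥ A.mulVec z) ↔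
      ∃ (P : Matrix (Fin (n + 1)) (Fin (n + 1)) ℝ) (η : ℝ),
        P.PosSemidef ∧ 0 ≤ η ∧ A = P + η • J := by
  have hJz (z : Fin (n + 1) → ℝ) :
      J.toQuadraticForm' z = z (Fin.last n) ^ 2 - Fin.init z ⬝ᵥ Fin.init z := by
    rw [toQuadraticForm'_apply, hJ, dotProduct_diagonal_snoc_mulVec]
  have hJpos : ∃ z, 0 < J.toQuadraticForm' z := ⟨Fin.snoc 0 1, by simp [hJz]⟩
  calc _ ↔ ∀ z, 0 ≤ J.toQuadraticForm' z → 0 ≤ A.toQuadraticForm' z := by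
        simp only [hJz, ← toQuadraticForm'_apply]
        exact forall_sqrt_le_imp_iff_of_even (QuadraticMap.map_neg _)
    _ ↔ ∃ η : ℝ, 0 ≤ η ∧ ∀ z, η * J.toQuadraticForm' z ≤ A.toQuadraticForm' z :=
        QuadraticMap.s_lemma hJpos
    _ ↔ _ := by
        simp only [toQuadraticForm'_apply]
        exact (exists_posSemidef_add_smul_iff hA (hJ ▸ isSymm_diagonal _)).symm
end

section
/- If v, w ∈ L := {(x,τ) ∈ ℝ^{n+1} : ‖x‖ ≤ τ} (the second-order cone), then the matrix wvᵀ + vwᵀ can be written as P + ηJ with P ⪰ 0 and η ≥ 0, where J = diag(−I_n, 1). -/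
/-! Take `η = vᵀJw = αβ - ⟪a, b⟫ ≥ 0`, where `v = (a, α)` and `w = (b, β)`, and
`P = wvᵀ + vwᵀ - ηJ`. At `(x, t)` the quadratic form of `P` is
`2 (⟪a, x⟫ + αt)(⟪b, x⟫ + βt) - η (t² - ‖x‖²)`, a quadratic in `t` with leading coefficient
`αβ + ⟪a, b⟫ ≥ 0`. Multiplied by that coefficient it becomes a square plus the determinant of
`Gram(a, b, x) + diag(α² - ‖a‖², β² - ‖b‖², 0)`, which is positive semidefinite. -/

open scoped Matrix RealInnerProductSpace
open Matrix

section InnerProductSpace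

variable {E : Type*} [NormedAddCommGroup E] [InnerProductSpace ℝ E] {a b : E} {α β : ℝ}

lemma abs_real_inner_le_of_norm_le (ha : ‖a‖ ≤ α) (hb : ‖b‖ ≤ β) : |⟪a, b⟫| ≤ α * β :=
  (abs_real_inner_le_norm a b).trans <|
    mul_le_mul ha hb (norm_nonneg b) ((norm_nonneg a).trans ha)

lemma gram_det_nonneg_of_norm_le (ha : ‖a‖ ≤ α) (hb : ‖b‖ ≤ β) (x : E) :
    0 ≤ (α ^ 2 * β ^ 2 - ⟪a, b⟫ ^ 2) * ‖x‖ ^ 2 + 2 * ⟪a, b⟫ * ⟪a, x⟫ * ⟪b, x⟫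
      - β ^ 2 * ⟪a, x⟫ ^ 2 - α ^ 2 * ⟪b, x⟫ ^ 2 := by
  have hda : 0 ≤ α ^ 2 - ‖a‖ ^ 2 := sub_nonneg.2 (pow_le_pow_left₀ (norm_nonneg a) ha 2)
  have hdb : 0 ≤ β ^ 2 - ‖b‖ ^ 2 := sub_nonneg.2 (pow_le_pow_left₀ (norm_nonneg b) hb 2)
  have hpsd := (posSemidef_gram ℝ ![a, b, x]).add
    (PosSemidef.diagonal (d := ![α ^ 2 - ‖a‖ ^ 2, β ^ 2 - ‖b‖ ^ 2, 0])
      (by intro i; fin_cases i <;> simp [hda, hdb]))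
  have hdet := hpsd.det_nonneg
  rw [det_fin_three] at hdet
  simp only [Nat.succ_eq_add_one, Nat.reduceAdd, Fin.isValue, Matrix.add_apply, gram_apply,
    cons_val_zero, inner_self_eq_norm_sq_to_K, Real.ringHom_apply, diagonal_apply_eq,
    add_sub_cancel, cons_val_one, cons_val, add_zero, ne_eq, Fin.reduceEq, not_false_eq_true,
    diagonal_apply_ne, zero_ne_one, one_ne_zero, sub_nonneg] at hdet
  rw [real_inner_comm a x, real_inner_comm b x, real_inner_comm a b] at hdet
  linarith

theorem mul_sub_norm_sq_le_two_mul_inner_add_mul_inner_add (ha : ‖a‖ ≤ α) (hb : ‖b‖ ≤ β)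
    (x : E) (t : ℝ) :
    (α * β - ⟪a, b⟫) * (t ^ 2 - ‖x‖ ^ 2) ≤ 2 * ((⟪a, x⟫ + α * t) * (⟪b, x⟫ + β * t)) := by
  have hg := gram_det_nonneg_of_norm_le ha hb x
  have hab := abs_le.1 (abs_real_inner_le_of_norm_le ha hb)
  rw [← sub_nonneg]
  rcases (neg_le_iff_add_nonneg.1 hab.1).eq_or_lt with hs | hs
  · -- `⟪a, b⟫ = -αβ` forces `β ⟪a, x⟫ + α ⟪b, x⟫ = 0`, killing the term linear in `t`
    have hc : ⟪a, b⟫ = -(α * β) := by linarith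
    have hlin : β * ⟪a, x⟫ + α * ⟪b, x⟫ = 0 := by
      rw [hc] at hg
      nlinarith [sq_nonneg (β * ⟪a, x⟫ + α * ⟪b, x⟫)]
    have hax := abs_real_inner_le_of_norm_le ha (le_refl ‖x‖)
    have hbx := abs_real_inner_le_of_norm_le hb (le_refl ‖x‖)
    have hpq : |⟪a, x⟫ * ⟪b, x⟫| ≤ α * β * ‖x‖ ^ 2 := by
      rw [abs_mul]
      nlinarith [abs_nonneg ⟪a, x⟫, abs_nonneg ⟪b, x⟫]
    have hform : 2 * ((⟪a, x⟫ + α * t) * (⟪b, x⟫ + β * t)) - (α * β - ⟪a, b⟫) * (t ^ 2 - ‖x‖ ^ 2)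
        = 2 * (⟪a, x⟫ * ⟪b, x⟫ + α * β * ‖x‖ ^ 2) + 2 * t * (β * ⟪a, x⟫ + α * ⟪b, x⟫) := by
      rw [hc]; ring
    rw [hform, hlin]
    linarith [(abs_le.1 hpq).1]
  · refine nonneg_of_mul_nonneg_right ?_ hs
    have hsq : (⟪a, b⟫ + α * β) *
          (2 * ((⟪a, x⟫ + α * t) * (⟪b, x⟫ + β * t)) - (α * β - ⟪a, b⟫) * (t ^ 2 - ‖x‖ ^ 2))
        = ((⟪a, b⟫ + α * β) * t + (β * ⟪a, x⟫ + α * ⟪b, x⟫)) ^ 2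
          + ((α ^ 2 * β ^ 2 - ⟪a, b⟫ ^ 2) * ‖x‖ ^ 2 + 2 * ⟪a, b⟫ * ⟪a, x⟫ * ⟪b, x⟫
            - β ^ 2 * ⟪a, x⟫ ^ 2 - α ^ 2 * ⟪b, x⟫ ^ 2) := by
      ring
    rw [hsq]
    exact add_nonneg (sq_nonneg _) hg

end InnerProductSpace

def secondOrderCone (n : ℕ) : Set (Fin (n + 1) → ℝ) :=
  {v | √(Fin.init v ⬝ᵥ Fin.init v) ≤ v (Fin.last n)}

def lorentzMatrix (n : ℕ) : Matrix (Fin (n + 1)) (Fin (n + 1)) ℝ :=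
  diagonal (Fin.snoc (fun _ : Fin n => (-1 : ℝ)) 1)

def spatialPart {n : ℕ} (u : Fin (n + 1) → ℝ) : EuclideanSpace ℝ (Fin n) :=
  WithLp.toLp 2 (Fin.init u)

section

variable {n : ℕ} {v w : Fin (n + 1) → ℝ}

lemma dotProduct_eq_inner_spatialPart_add_mul_last (u y : Fin (n + 1) → ℝ) :
    u ⬝ᵥ y = ⟪spatialPart u, spatialPart y⟫ + u (Fin.last n) * y (Fin.last n) := by
  rw [spatialPart, spatialPart, EuclideanSpace.inner_toLp_toLp, star_trivial,
    dotProduct_comm (Fin.init y), dotProduct, Fin.sum_univ_castSucc]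
  rfl

lemma dotProduct_lorentzMatrix_mulVec (u y : Fin (n + 1) → ℝ) :
    u ⬝ᵥ (lorentzMatrix n *ᵥ y) =
      u (Fin.last n) * y (Fin.last n) - ⟪spatialPart u, spatialPart y⟫ := by
  have hspatial : spatialPart (lorentzMatrix n *ᵥ y) = -spatialPart y := by
    ext i
    simp [spatialPart, lorentzMatrix, mulVec_diagonal, Fin.init]
  have hlast : (lorentzMatrix n *ᵥ y) (Fin.last n) = y (Fin.last n) := by
    simp [lorentzMatrix, mulVec_diagonal]
  rw [dotProduct_eq_inner_spatialPart_add_mul_last, hspatial, hlast, inner_neg_right]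
  ring

lemma isHermitian_lorentzMatrix : (lorentzMatrix n).IsHermitian := isHermitian_diagonal _

lemma norm_spatialPart_le_of_mem_secondOrderCone (hv : v ∈ secondOrderCone n) :
    ‖spatialPart v‖ ≤ v (Fin.last n) := by
  rwa [norm_eq_sqrt_real_inner, spatialPart, EuclideanSpace.inner_toLp_toLp, star_trivial]

lemma dotProduct_lorentzMatrix_mulVec_nonneg (hv : v ∈ secondOrderCone n)
    (hw : w ∈ secondOrderCone n) : 0 ≤ v ⬝ᵥ (lorentzMatrix n *ᵥ w) := by
  rw [dotProduct_lorentzMatrix_mulVec, sub_nonneg]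
  exact (abs_le.1 (abs_real_inner_le_of_norm_le (norm_spatialPart_le_of_mem_secondOrderCone hv)
    (norm_spatialPart_le_of_mem_secondOrderCone hw))).2

lemma dotProduct_vecMulVec_add_vecMulVec_mulVec (v w x : Fin (n + 1) → ℝ) :
    x ⬝ᵥ ((vecMulVec w v + vecMulVec v w) *ᵥ x) = 2 * ((v ⬝ᵥ x) * (w ⬝ᵥ x)) := by
  simp only [add_mulVec, vecMulVec_mulVec, op_smul_eq_smul, dotProduct_add, dotProduct_smul,
    smul_eq_mul, dotProduct_comm x v, dotProduct_comm x w]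
  ring

theorem posSemidef_vecMulVec_add_vecMulVec_sub_smul_lorentzMatrix (hv : v ∈ secondOrderCone n)
    (hw : w ∈ secondOrderCone n) :
    (vecMulVec w v + vecMulVec v w -
      (v ⬝ᵥ (lorentzMatrix n *ᵥ w)) • lorentzMatrix n).PosSemidef := by
  have hsymm : (vecMulVec w v + vecMulVec v w).IsHermitian := by
    simpa [conjTranspose_eq_transpose_of_trivial] using
      isHermitian_add_transpose_self (vecMulVec w v)
  refine .of_dotProduct_mulVec_nonneg
    (hsymm.sub (isHermitian_lorentzMatrix.smul (IsSelfAdjoint.all _))) fun x => ?_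
  rw [star_trivial, sub_mulVec, dotProduct_sub, smul_mulVec, dotProduct_smul, smul_eq_mul,
    dotProduct_vecMulVec_add_vecMulVec_mulVec, sub_nonneg, dotProduct_lorentzMatrix_mulVec,
    dotProduct_lorentzMatrix_mulVec, dotProduct_eq_inner_spatialPart_add_mul_last v,
    dotProduct_eq_inner_spatialPart_add_mul_last w, real_inner_self_eq_norm_sq, ← sq]
  exact mul_sub_norm_sq_le_two_mul_inner_add_mul_inner_add
    (norm_spatialPart_le_of_mem_secondOrderCone hv) (norm_spatialPart_le_of_mem_secondOrderCone hw)
    (spatialPart x) (x (Fin.last n))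

end

/-- If `v, w` belong to the second-order cone
`L = {(x,τ) ∈ ℝ^{n+1} : ‖x‖ ≤ τ}`, then `wvᵀ + vwᵀ = P + ηJ` for some `P ⪰ 0`
and `η ≥ 0`, where `J = diag(−Iₙ, 1)`. -/
theorem rank_two_in_psd_plus_coneJ {n : ℕ}
    (J : Matrix (Fin (n + 1)) (Fin (n + 1)) ℝ)
    (hJ : J = Matrix.diagonal (Fin.snoc (fun _ : Fin n => (-1 : ℝ)) 1))
    (v w : Fin (n + 1) → ℝ)
    (hv : Real.sqrt ((fun i : Fin n => v i.castSucc) ⬝ᵥ (fun i : Fin n => v i.castSucc)) ≤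
      v (Fin.last n))
    (hw : Real.sqrt ((fun i : Fin n => w i.castSucc) ⬝ᵥ (fun i : Fin n => w i.castSucc)) ≤
      w (Fin.last n)) :
    ∃ (P : Matrix (Fin (n + 1)) (Fin (n + 1)) ℝ) (η : ℝ),
      P.PosSemidef ∧ 0 ≤ η ∧ vecMulVec w v + vecMulVec v w = P + η • J := by
  subst hJ
  exact ⟨_, _, posSemidef_vecMulVec_add_vecMulVec_sub_smul_lorentzMatrix hv hw,
    dotProduct_lorentzMatrix_mulVec_nonneg hv hw, (sub_add_cancel _ _).symm⟩
end

section
/- Let D = {(u,y) ∈ ℝ^{k}×ℝⁿ : uᵀu ≤ 1, Fy = f, Gy ≤ g}, where F has full row rank, x_p solves Fy = f, and the columns of H form a basis of ker(F); set r = n − m_f and D_Λ = {(u,w) ∈ ℝ^k×ℝ^r : uᵀu ≤ 1, GHw ≤ g − Gx_p}. Then D = {(u, x_p + Hw) : (u,w) ∈ D_Λ}, and with Λ : Sym(k+n+1) → Sym(k+r+1) the linear substitution map induced by y = x_p + Hw, one has FC₊(D) = Λ^{−1}(FC₊(D_Λ)). -/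
open scoped Matrix
open Matrix

/-- The cone `FC₊(S)` of symmetric matrices representing quadratic functions
`(u,y) ↦ [u;y;1]ᵀ A [u;y;1]` that are nonnegative on a set
`S ⊆ ℝ^k × ℝ^n` of pairs. -/
def FCpair {k n : ℕ} (S : Set ((Fin k → ℝ) × (Fin n → ℝ))) :
    Set (Matrix ((Fin k ⊕ Fin n) ⊕ Unit) ((Fin k ⊕ Fin n) ⊕ Unit) ℝ) :=
  {A | A.IsSymm ∧ ∀ p ∈ S,
    0 ≤ (Sum.elim (Sum.elim p.1 p.2) (fun _ => (1 : ℝ))) ⬝ᵥ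
      A.mulVec (Sum.elim (Sum.elim p.1 p.2) (fun _ => (1 : ℝ)))}

/-- The matrix of the affine substitution `(u, w, t) ↦ (u, x_p t + H w, t)`,
so that the linear map `Λ : A ↦ Tᵀ A T` is the substitution map induced by
`y = x_p + Hw` on matrix representations of quadratic functions. -/
def subMatrix {k n r : ℕ} (H : Matrix (Fin n) (Fin r) ℝ) (xp : Fin n → ℝ) :
    Matrix ((Fin k ⊕ Fin n) ⊕ Unit) ((Fin k ⊕ Fin r) ⊕ Unit) ℝ :=
  Matrix.of fun i j =>
    match i, j with
    | Sum.inl (Sum.inl i), Sum.inl (Sum.inl j) => if i = j then (1 : ℝ) else 0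
    | Sum.inl (Sum.inl _), _ => 0
    | Sum.inl (Sum.inr i), Sum.inl (Sum.inr j) => H i j
    | Sum.inl (Sum.inr i), Sum.inr _ => xp i
    | Sum.inl (Sum.inr _), _ => 0
    | Sum.inr _, Sum.inr _ => 1
    | Sum.inr _, _ => 0

lemma subMatrix_mulVec {k n r : ℕ} (H : Matrix (Fin n) (Fin r) ℝ) (xp : Fin n → ℝ)
    (u : Fin k → ℝ) (w : Fin r → ℝ) :
    (subMatrix (k := k) H xp).mulVec (Sum.elim (Sum.elim u w) (fun _ => (1:ℝ)))
      = Sum.elim (Sum.elim u (xp + H.mulVec w)) (fun _ => (1:ℝ)) := by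
  funext i
  rcases i with (i | i) | i <;>
    simp [subMatrix, mulVec, dotProduct, Fintype.sum_sum_type, add_comm]

/-- Proposition: reduction to the subspace. With
`D = {(u,y) : uᵀu ≤ 1, Fy = f, Gy ≤ g}`, `F` of full row rank, `Fx_p = f`,
the columns of `H` a basis of `ker F`, `r = n − m_f`, and
`D_Λ = {(u,w) : uᵀu ≤ 1, GHw ≤ g − Gx_p}`, one has
`D = {(u, x_p + Hw) : (u,w) ∈ D_Λ}` and `FC₊(D) = Λ^{−1}(FC₊(D_Λ))`
(on symmetric matrices), where `Λ(A) = Tᵀ A T` is the linear substitution map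
induced by `y = x_p + Hw`. -/
theorem subspace_reduction {k n mf mg r : ℕ}
    (F : Matrix (Fin mf) (Fin n) ℝ) (hrank : F.rank = mf) (f : Fin mf → ℝ)
    (hr : r = n - mf)
    (H : Matrix (Fin n) (Fin r) ℝ)
    (hHindep : LinearIndependent ℝ (fun j : Fin r => (fun i : Fin n => H i j)))
    (hHspan : ∀ v : Fin n → ℝ, F.mulVec v = 0 ↔ ∃ w : Fin r → ℝ, v = H.mulVec w)
    (xp : Fin n → ℝ) (hxp : F.mulVec xp = f)
    (G : Matrix (Fin mg) (Fin n) ℝ) (g : Fin mg → ℝ)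
    (D : Set ((Fin k → ℝ) × (Fin n → ℝ)))
    (hD : D = {p | p.1 ⬝ᵥ p.1 ≤ 1 ∧ F.mulVec p.2 = f ∧ G.mulVec p.2 ≤ g})
    (DΛ : Set ((Fin k → ℝ) × (Fin r → ℝ)))
    (hDΛ : DΛ = {q | q.1 ⬝ᵥ q.1 ≤ 1 ∧ (G * H).mulVec q.2 ≤ g - G.mulVec xp}) :
    D = (fun q : (Fin k → ℝ) × (Fin r → ℝ) => (q.1, xp + H.mulVec q.2)) '' DΛ ∧
    FCpair D = {A | A.IsSymm ∧
      (subMatrix (k := k) H xp)ᵀ * A * subMatrix (k := k) H xp ∈ FCpair DΛ} := by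
  have hpart1 : D = (fun q : (Fin k → ℝ) × (Fin r → ℝ) =>
      (q.1, xp + H.mulVec q.2)) '' DΛ := by
    ext p
    constructor
    · rintro hp
      rw [hD] at hp
      obtain ⟨hu, hF, hG⟩ := hp
      have h0 : F.mulVec (p.2 - xp) = 0 := by
        rw [Matrix.mulVec_sub, hF, hxp, sub_self]
      obtain ⟨w, hw⟩ := (hHspan _).mp h0
      refine ⟨(p.1, w), ?_, ?_⟩
      · rw [hDΛ]
        refine ⟨hu, ?_⟩
        intro i
        have : (G * H).mulVec w = G.mulVec p.2 - G.mulVec xp := by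
          rw [← Matrix.mulVec_mulVec, ← hw, Matrix.mulVec_sub]
        rw [this]
        simp only [Pi.sub_apply]
        exact sub_le_sub_right (hG i) _
      · have : xp + H.mulVec w = p.2 := by rw [← hw]; ring
        simp [this]
    · rintro ⟨q, hq, rfl⟩
      rw [hDΛ] at hq
      obtain ⟨hu, hGw⟩ := hq
      rw [hD]
      refine ⟨hu, ?_, ?_⟩
      · have h0 : F.mulVec (H.mulVec q.2) = 0 := (hHspan _).mpr ⟨q.2, rfl⟩
        simp [Matrix.mulVec_add, h0, hxp]
      · intro i
        have := hGw i
        simp only [Matrix.mulVec_add, ← Matrix.mulVec_mulVec]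
        simp only [Pi.sub_apply] at this
        simpa [Pi.add_apply] using add_le_of_le_sub_left this
  refine ⟨hpart1, ?_⟩
  set T := subMatrix (k := k) H xp with hT
  have hkey : ∀ (A : Matrix ((Fin k ⊕ Fin n) ⊕ Unit) ((Fin k ⊕ Fin n) ⊕ Unit) ℝ)
      (z : (Fin k ⊕ Fin r) ⊕ Unit → ℝ),
      z ⬝ᵥ (Tᵀ * A * T).mulVec z = (T.mulVec z) ⬝ᵥ A.mulVec (T.mulVec z) := by
    intro A z
    rw [← Matrix.mulVec_mulVec, ← Matrix.mulVec_mulVec, Matrix.dotProduct_mulVec,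
      Matrix.vecMul_transpose]
  ext A
  simp only [FCpair, Set.mem_setOf_eq]
  constructor
  · rintro ⟨hA, h⟩
    refine ⟨hA, ?_, ?_⟩
    · rw [Matrix.IsSymm, Matrix.transpose_mul, Matrix.transpose_mul,
        Matrix.transpose_transpose, hA.eq, Matrix.mul_assoc]
    · intro q hq
      rw [hkey, subMatrix_mulVec]
      exact h (q.1, xp + H.mulVec q.2) (hpart1 ▸ ⟨q, hq, rfl⟩)
  · rintro ⟨hA, _, h⟩
    refine ⟨hA, ?_⟩
    intro p hp
    rw [hpart1] at hp
    obtain ⟨q, hq, rfl⟩ := hp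
    have := h q hq
    rwa [hkey, subMatrix_mulVec] at this
end
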